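/- Let (Ω, Σ) be a measurable space, H and K separable complex Hilbert spaces, M ∈ O_Σ(H) an observable and E ∈ C(K;H) a channel that are compatible. If M is extremal in O_Σ(H) and E is extremal in C(K;H), then their unique joint instrument Γ is extremal in the convex set I_Σ(K;H) of instruments. -/

import Mathlib

/-!
If two instruments `Γ₁, Γ₂` have the same observable marginal and the same extremal channel
marginal `E`, then for every measurable `X` both `Γ₁(X) + Γ₂(Xᶜ)` and `Γ₂(X) + Γ₁(Xᶜ)` are
channels, and their average is `E`; extremality of `E` makes them equal, which together with
`Γ₁(X) + Γ₁(Xᶜ) = Γ₂(X) + Γ₂(Xᶜ)` forces `Γ₁(X) = Γ₂(X)`. This gives uniqueness of the joint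
instrument. For extremality, a decomposition `Γ = t Γ₁ + (1 - t) Γ₂` induces decompositions of
`M` and `E`, so by their extremality `Γ₁` and `Γ₂` share both marginals and hence coincide.
-/

open scoped ComplexOrder ComplexInnerProductSpace Topology

noncomputable section

/-- A linear map `Φ : A → L(H)` from a `*`-algebra into the bounded operators on a complex
Hilbert space `H` is *completely positive* if for all `n`, `a₁, …, aₙ ∈ A` and
`φ₁, …, φₙ ∈ H` one has `∑ j k, ⟪φ j, Φ (star (a j) * a k) (φ k)⟫ ≥ 0`. -/
def IsCompletelyPositive {A : Type*} [NonUnitalNonAssocSemiring A] [StarRing A] [Module ℂ A]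
    {H : Type*} [NormedAddCommGroup H] [InnerProductSpace ℂ H]
    (Φ : A →ₗ[ℂ] H →L[ℂ] H) : Prop :=
  ∀ (n : ℕ) (a : Fin n → A) (v : Fin n → H),
    0 ≤ ∑ j, ∑ k, ⟪v j, Φ (star (a j) * a k) (v k)⟫

/-- The convex set `CP_P(A;H)` of completely positive maps `Φ : A → L(H)` with `Φ 1 = P`. -/
def CPWithUnit (A : Type*) [Ring A] [StarRing A] [Algebra ℂ A]
    (H : Type*) [NormedAddCommGroup H] [InnerProductSpace ℂ H]
    (P : H →L[ℂ] H) : Set (A →ₗ[ℂ] H →L[ℂ] H) :=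
  {Φ | IsCompletelyPositive Φ ∧ Φ 1 = P}

/-- `x` is an extremal point of the convex set `S`: whenever `x` is a nontrivial convex
combination of two members of `S`, they coincide. -/
def IsExtremalIn {V : Type*} [AddCommMonoid V] [Module ℂ V] (S : Set V) (x : V) : Prop :=
  x ∈ S ∧ ∀ y ∈ S, ∀ z ∈ S, ∀ t : ℝ, 0 < t → t < 1 →
    x = (t : ℂ) • y + ((1 - t : ℝ) : ℂ) • z → y = z

/-- The σ-weak (ultraweak) topology on `L(E)`, i.e. the coarsest topology making all
functionals `T ↦ ∑' n, ⟪x n, T (y n)⟫` (with `x, y` square-summable sequences) continuous. -/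
def sigmaWeakTopology (E : Type*) [NormedAddCommGroup E] [InnerProductSpace ℂ E] :
    TopologicalSpace (E →L[ℂ] E) :=
  ⨅ (x : ℕ → E) (y : ℕ → E) (_ : Summable fun n => ‖x n‖ ^ 2)
    (_ : Summable fun n => ‖y n‖ ^ 2),
    TopologicalSpace.induced (fun T : E →L[ℂ] E => ∑' n, ⟪x n, T (y n)⟫) inferInstance

/-- A map `Φ : L(K) → L(H)` is *normal* if it is continuous with respect to the
σ-weak (ultraweak) topologies. -/
def IsNormalMap {K H : Type*} [NormedAddCommGroup K] [InnerProductSpace ℂ K]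
    [NormedAddCommGroup H] [InnerProductSpace ℂ H]
    (Φ : (K →L[ℂ] K) →ₗ[ℂ] (H →L[ℂ] H)) : Prop :=
  Continuous[sigmaWeakTopology K, sigmaWeakTopology H] ⇑Φ

/-- A channel (in the Heisenberg picture) from `H` to `K` is a normal unital completely
positive map `L(K) → L(H)`. -/
def IsChannel {K H : Type*} [NormedAddCommGroup K] [InnerProductSpace ℂ K] [CompleteSpace K]
    [NormedAddCommGroup H] [InnerProductSpace ℂ H] [CompleteSpace H]
    (Φ : (K →L[ℂ] K) →ₗ[ℂ] (H →L[ℂ] H)) : Prop :=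
  IsCompletelyPositive Φ ∧ IsNormalMap Φ ∧ Φ 1 = 1

/-- The convex set `C(K;H)` of channels. -/
def ChannelSet (K H : Type*) [NormedAddCommGroup K] [InnerProductSpace ℂ K] [CompleteSpace K]
    [NormedAddCommGroup H] [InnerProductSpace ℂ H] [CompleteSpace H] :
    Set ((K →L[ℂ] K) →ₗ[ℂ] (H →L[ℂ] H)) :=
  {Φ | IsChannel Φ}

/-- A normalized positive operator valued measure (POVM, observable) on the measurable
space `Ω` with values in `L(H)`: positive operator values, `M univ = 1`, and σ-additivity
in the weak operator topology. -/
def IsPOVM {Ω : Type*} [MeasurableSpace Ω] {H : Type*}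
    [NormedAddCommGroup H] [InnerProductSpace ℂ H] [CompleteSpace H]
    (M : Set Ω → H →L[ℂ] H) : Prop :=
  (∀ X : Set Ω, MeasurableSet X → (M X).IsPositive) ∧
  M Set.univ = 1 ∧
  ∀ f : ℕ → Set Ω, (∀ n, MeasurableSet (f n)) → Pairwise (Function.onFun Disjoint f) →
    ∀ x y : H, HasSum (fun n => ⟪x, M (f n) y⟫) ⟪x, M (⋃ n, f n) y⟫

/-- A POVM is extremal in the convex set of all POVMs on the same σ-algebra. -/
def IsExtremalPOVM {Ω : Type*} [MeasurableSpace Ω] {H : Type*}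
    [NormedAddCommGroup H] [InnerProductSpace ℂ H] [CompleteSpace H]
    (M : Set Ω → H →L[ℂ] H) : Prop :=
  IsPOVM M ∧ ∀ M₁ M₂ : Set Ω → H →L[ℂ] H, IsPOVM M₁ → IsPOVM M₂ →
    ∀ t : ℝ, 0 < t → t < 1 →
    (∀ X : Set Ω, MeasurableSet X → M X = (t : ℂ) • M₁ X + ((1 - t : ℝ) : ℂ) • M₂ X) →
    ∀ X : Set Ω, MeasurableSet X → M₁ X = M₂ X

/-- An instrument `Γ ∈ I_Σ(K;H)`: a map `Γ : Σ × L(K) → L(H)` such that each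
`Γ(X, ·)` is a normal completely positive linear map, `Γ(·, B)` is an operator measure
(σ-additive in the weak operator topology) for every `B`, `Γ(·, 1)` is a POVM and
`Γ(Ω, ·)` is a channel. -/
def IsInstrument {Ω : Type*} [MeasurableSpace Ω] {K H : Type*}
    [NormedAddCommGroup K] [InnerProductSpace ℂ K] [CompleteSpace K]
    [NormedAddCommGroup H] [InnerProductSpace ℂ H] [CompleteSpace H]
    (Γ : Set Ω → ((K →L[ℂ] K) →ₗ[ℂ] (H →L[ℂ] H))) : Prop :=
  (∀ X : Set Ω, MeasurableSet X → IsCompletelyPositive (Γ X)) ∧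
  (∀ X : Set Ω, MeasurableSet X → IsNormalMap (Γ X)) ∧
  IsPOVM (fun X => Γ X 1) ∧
  (∀ (B : K →L[ℂ] K) (f : ℕ → Set Ω), (∀ n, MeasurableSet (f n)) →
    Pairwise (Function.onFun Disjoint f) → ∀ x y : H,
      HasSum (fun n => ⟪x, Γ (f n) B y⟫) ⟪x, Γ (⋃ n, f n) B y⟫) ∧
  IsChannel (Γ Set.univ)

/-- An instrument is extremal in the convex set `I_Σ(K;H)` of all instruments. -/
def IsExtremalInstrument {Ω : Type*} [MeasurableSpace Ω] {K H : Type*}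
    [NormedAddCommGroup K] [InnerProductSpace ℂ K] [CompleteSpace K]
    [NormedAddCommGroup H] [InnerProductSpace ℂ H] [CompleteSpace H]
    (Γ : Set Ω → ((K →L[ℂ] K) →ₗ[ℂ] (H →L[ℂ] H))) : Prop :=
  IsInstrument Γ ∧ ∀ Γ₁ Γ₂ : Set Ω → ((K →L[ℂ] K) →ₗ[ℂ] (H →L[ℂ] H)),
    IsInstrument Γ₁ → IsInstrument Γ₂ → ∀ t : ℝ, 0 < t → t < 1 →
    (∀ X : Set Ω, MeasurableSet X → Γ X = (t : ℂ) • Γ₁ X + ((1 - t : ℝ) : ℂ) • Γ₂ X) →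
    ∀ X : Set Ω, MeasurableSet X → Γ₁ X = Γ₂ X

/-- The observable `M` and the channel `E` are compatible with joint instrument `Γ`:
`Γ(X, 1) = M X` for all measurable `X` and `Γ(Ω, ·) = E`. -/
def IsJointInstrument {Ω : Type*} [MeasurableSpace Ω] {K H : Type*}
    [NormedAddCommGroup K] [InnerProductSpace ℂ K] [CompleteSpace K]
    [NormedAddCommGroup H] [InnerProductSpace ℂ H] [CompleteSpace H]
    (Γ : Set Ω → ((K →L[ℂ] K) →ₗ[ℂ] (H →L[ℂ] H)))
    (M : Set Ω → H →L[ℂ] H) (E : (K →L[ℂ] K) →ₗ[ℂ] (H →L[ℂ] H)) : Prop :=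
  IsInstrument Γ ∧ (∀ X : Set Ω, MeasurableSet X → Γ X 1 = M X) ∧ Γ Set.univ = E

open MeasureTheory Set

section CountablyAdditive

variable {Ω V : Type*} [MeasurableSpace Ω] [AddCommGroup V] [TopologicalSpace V]

def IsCountablyAdditive (μ : Set Ω → V) : Prop :=
  ∀ f : ℕ → Set Ω, (∀ n, MeasurableSet (f n)) → Pairwise (Function.onFun Disjoint f) →
    HasSum (fun n => μ (f n)) (μ (⋃ n, f n))

namespace IsCountablyAdditive

variable {μ : Set Ω → V}

theorem apply_empty [IsTopologicalAddGroup V] [T2Space V] (hμ : IsCountablyAdditive μ) :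
    μ ∅ = 0 := by
  have h : HasSum (fun _ : ℕ => μ ∅) (μ ∅) := by
    simpa using hμ (fun _ => ∅) (fun _ => .empty) (fun _ _ _ => disjoint_bot_left)
  simpa using h.unique ((hasSum_nat_add_iff' 1).mpr h)

open scoped Classical in
def toVectorMeasure [IsTopologicalAddGroup V] [T2Space V] (hμ : IsCountablyAdditive μ) :
    VectorMeasure Ω V where
  measureOf' s := if MeasurableSet s then μ s else 0
  empty' := by simp [hμ.apply_empty]
  not_measurable' _ hs := if_neg hs
  m_iUnion' f hf hd := by simpa [hf, MeasurableSet.iUnion hf] using hμ f hf hd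

theorem apply_union [IsTopologicalAddGroup V] [T2Space V] (hμ : IsCountablyAdditive μ)
    {A B : Set Ω} (hA : MeasurableSet A) (hB : MeasurableSet B) (hAB : Disjoint A B) :
    μ (A ∪ B) = μ A + μ B := by
  simpa [toVectorMeasure, hA, hB, hA.union hB] using hμ.toVectorMeasure.of_union hAB hA hB

end IsCountablyAdditive

end CountablyAdditive

section SigmaWeak

variable {E : Type*} [NormedAddCommGroup E] [InnerProductSpace ℂ E]

theorem summable_inner_apply_of_summable_sq {x y : ℕ → E} (hx : Summable fun n => ‖x n‖ ^ 2)
    (hy : Summable fun n => ‖y n‖ ^ 2) (T : E →L[ℂ] E) :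
    Summable fun n => ⟪x n, T (y n)⟫ := by
  refine .of_norm <| .of_nonneg_of_le (fun n => norm_nonneg _) (fun n => ?_)
    ((hx.add hy).mul_left ‖T‖)
  calc ‖⟪x n, T (y n)⟫‖ ≤ ‖x n‖ * (‖T‖ * ‖y n‖) :=
        (norm_inner_le_norm _ _).trans (by gcongr; exact T.le_opNorm _)
    _ ≤ ‖T‖ * (‖x n‖ ^ 2 + ‖y n‖ ^ 2) := by
        nlinarith [two_mul_le_add_sq ‖x n‖ ‖y n‖, norm_nonneg T, norm_nonneg (x n),
          norm_nonneg (y n)]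

def sigmaWeakPairing (x y : ℕ → E) (hx : Summable fun n => ‖x n‖ ^ 2)
    (hy : Summable fun n => ‖y n‖ ^ 2) : (E →L[ℂ] E) →+ ℂ where
  toFun T := ∑' n, ⟪x n, T (y n)⟫
  map_zero' := by simp
  map_add' S T := by
    simp only [add_apply, inner_add_right]
    exact (summable_inner_apply_of_summable_sq hx hy S).tsum_add
      (summable_inner_apply_of_summable_sq hx hy T)

theorem continuousAdd_sigmaWeakTopology :
    @ContinuousAdd (E →L[ℂ] E) (sigmaWeakTopology E) _ :=
  continuousAdd_iInf fun x => continuousAdd_iInf fun y => continuousAdd_iInf fun hx =>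
    continuousAdd_iInf fun hy => continuousAdd_induced (sigmaWeakPairing x y hx hy)

end SigmaWeak

theorem IsExtremalIn.eq_of_add_eq_of_add_mem {V : Type*} [AddCommGroup V] [Module ℂ V]
    {S : Set V} {e a b c d : V} (he : IsExtremalIn S e) (hab : a + b = e) (hcd : c + d = e)
    (had : a + d ∈ S) (hcb : c + b ∈ S) : a = c := by
  have hmid : e = ((1 / 2 : ℝ) : ℂ) • (a + d) + ((1 - 1 / 2 : ℝ) : ℂ) • (c + b) := by
    subst hab
    push_cast
    linear_combination (norm := module) ((-1 / 2 : ℂ) • hcd)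
  have hswap := he.2 _ had _ hcb (1 / 2) (by norm_num) (by norm_num) hmid
  linear_combination (norm := module) (1 / 2 : ℂ) • (hswap + hab - hcd)

section Instruments

variable {K H : Type*} [NormedAddCommGroup K] [InnerProductSpace ℂ K]
  [NormedAddCommGroup H] [InnerProductSpace ℂ H]

theorem IsCompletelyPositive.add {A : Type*} [NonUnitalNonAssocSemiring A] [StarRing A]
    [Module ℂ A] {Φ Ψ : A →ₗ[ℂ] H →L[ℂ] H} (hΦ : IsCompletelyPositive Φ)
    (hΨ : IsCompletelyPositive Ψ) : IsCompletelyPositive (Φ + Ψ) := fun n a v => by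
  simpa only [LinearMap.add_apply, add_apply, inner_add_right,
    Finset.sum_add_distrib] using add_nonneg (hΦ n a v) (hΨ n a v)

theorem IsNormalMap.add {Φ Ψ : (K →L[ℂ] K) →ₗ[ℂ] (H →L[ℂ] H)} (hΦ : IsNormalMap Φ)
    (hΨ : IsNormalMap Ψ) : IsNormalMap (Φ + Ψ) := by
  let _ := sigmaWeakTopology K
  let _ := sigmaWeakTopology H
  have := continuousAdd_sigmaWeakTopology (E := H)
  exact Continuous.add hΦ hΨ

variable {Ω : Type*} [MeasurableSpace Ω] [CompleteSpace K] [CompleteSpace H]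
  {Γ Γ₁ Γ₂ : Set Ω → ((K →L[ℂ] K) →ₗ[ℂ] (H →L[ℂ] H))} {X : Set Ω}

namespace IsInstrument

theorem add_compl (hΓ : IsInstrument Γ) (hX : MeasurableSet X) : Γ X + Γ Xᶜ = Γ univ := by
  ext B y : 2
  refine ext_inner_left ℂ fun x => ?_
  have hμ : IsCountablyAdditive fun Y => ⟪x, Γ Y B y⟫ := fun f hf hd => hΓ.2.2.2.1 B f hf hd x y
  simpa [inner_add_right] using (hμ.apply_union hX hX.compl disjoint_compl_right).symm

theorem isChannel_add_compl (h₁ : IsInstrument Γ₁) (h₂ : IsInstrument Γ₂)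
    (hX : MeasurableSet X) (hobs : Γ₁ X 1 = Γ₂ X 1) : IsChannel (Γ₁ X + Γ₂ Xᶜ) := by
  refine ⟨(h₁.1 X hX).add (h₂.1 _ hX.compl), (h₁.2.1 X hX).add (h₂.2.1 _ hX.compl), ?_⟩
  rw [LinearMap.add_apply, hobs, ← LinearMap.add_apply, h₂.add_compl hX]
  exact h₂.2.2.2.2.2.2

theorem apply_eq_of_extremal_channel (h₁ : IsInstrument Γ₁) (h₂ : IsInstrument Γ₂)
    (hX : MeasurableSet X) (hobs : Γ₁ X 1 = Γ₂ X 1) (hch : Γ₁ univ = Γ₂ univ)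
    (hext : IsExtremalIn (ChannelSet K H) (Γ₁ univ)) : Γ₁ X = Γ₂ X :=
  hext.eq_of_add_eq_of_add_mem (h₁.add_compl hX) ((h₂.add_compl hX).trans hch.symm)
    (h₁.isChannel_add_compl h₂ hX hobs) (h₂.isChannel_add_compl h₁ hX hobs.symm)

end IsInstrument

end Instruments


theorem joint_instrument_extremal_of_extremal_marginals_general
    {Ω : Type*} [MeasurableSpace Ω] {K H : Type*}
    [NormedAddCommGroup K] [InnerProductSpace ℂ K] [CompleteSpace K]
    [NormedAddCommGroup H] [InnerProductSpace ℂ H] [CompleteSpace H]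
    (M : Set Ω → H →L[ℂ] H)
    (E : (K →L[ℂ] K) →ₗ[ℂ] (H →L[ℂ] H))
    (Γ : Set Ω → ((K →L[ℂ] K) →ₗ[ℂ] (H →L[ℂ] H)))
    (hΓ : IsJointInstrument Γ M E)
    (hextM : IsExtremalPOVM M) (hextE : IsExtremalIn (ChannelSet K H) E) :
    (∀ Γ' : Set Ω → ((K →L[ℂ] K) →ₗ[ℂ] (H →L[ℂ] H)), IsJointInstrument Γ' M E →
      ∀ X : Set Ω, MeasurableSet X → Γ' X = Γ X) ∧
    IsExtremalInstrument Γ := by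
  obtain ⟨hΓ, hΓM, rfl⟩ := hΓ
  refine ⟨fun Γ' ⟨hΓ', hΓ'M, hΓ'E⟩ X hX => ?_, hΓ, fun Γ₁ Γ₂ h₁ h₂ t ht₀ ht₁ hmix X hX => ?_⟩
  · exact hΓ'.apply_eq_of_extremal_channel hΓ hX ((hΓ'M X hX).trans (hΓM X hX).symm) hΓ'E
      (hΓ'E ▸ hextE)
  have hobs : ∀ Y, MeasurableSet Y → Γ₁ Y 1 = Γ₂ Y 1 :=
    hextM.2 _ _ h₁.2.2.1 h₂.2.2.1 t ht₀ ht₁ fun Y hY => by rw [← hΓM Y hY, hmix Y hY]; rfl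
  have hch : Γ₁ univ = Γ₂ univ :=
    hextE.2 _ h₁.2.2.2.2 _ h₂.2.2.2.2 t ht₀ ht₁ (hmix _ .univ)
  have hΓ₁ : Γ₁ univ = Γ univ := by
    rw [hmix _ .univ, ← hch, ← add_smul, ← Complex.ofReal_add, add_sub_cancel, Complex.ofReal_one,
      one_smul]
  exact h₁.apply_eq_of_extremal_channel h₂ hX (hobs X hX) hch (hΓ₁ ▸ hextE)

/-- **Extremality of the joint instrument** (item (f) of the paper). Let `M` be an
observable and `E` a channel that are compatible, with joint instrument `Γ`. If `M` is
extremal among POVMs and `E` is extremal among channels, then the joint instrument is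
unique and extremal in the convex set `I_Σ(K;H)` of instruments. -/
theorem joint_instrument_extremal_of_extremal_marginals
    {Ω : Type*} [MeasurableSpace Ω] {K H : Type*}
    [NormedAddCommGroup K] [InnerProductSpace ℂ K] [CompleteSpace K]
    [TopologicalSpace.SeparableSpace K]
    [NormedAddCommGroup H] [InnerProductSpace ℂ H] [CompleteSpace H]
    [TopologicalSpace.SeparableSpace H]
    (M : Set Ω → H →L[ℂ] H) (hM : IsPOVM M)
    (E : (K →L[ℂ] K) →ₗ[ℂ] (H →L[ℂ] H)) (hE : E ∈ ChannelSet K H)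
    (Γ : Set Ω → ((K →L[ℂ] K) →ₗ[ℂ] (H →L[ℂ] H)))
    (hΓ : IsJointInstrument Γ M E)
    (hextM : IsExtremalPOVM M) (hextE : IsExtremalIn (ChannelSet K H) E) :
    (∀ Γ' : Set Ω → ((K →L[ℂ] K) →ₗ[ℂ] (H →L[ℂ] H)), IsJointInstrument Γ' M E →
      ∀ X : Set Ω, MeasurableSet X → Γ' X = Γ X) ∧
    IsExtremalInstrument Γ :=
  joint_instrument_extremal_of_extremal_marginals_general M E Γ hΓ hextM hextE
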